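/- arXiv:2103.07291 — 2 statements merged into one kernel-verified Lean document; each statement's English description precedes it below -/
import Mathlib

section
/- Let F : ℝ → ℝ be nondecreasing, right-continuous, with infimum 0 and supremum 1, and let f : (0,1) → ℝ be a Borel function with f_*λ_{(0,1)} = ν_F. Then there exists a Borel function α : (0,1) → (0,1) with α_*λ_{(0,1)} = λ_{(0,1)} such that f(s) = F^{(-1)}(α(s)) for Lebesgue-almost every s ∈ (0,1). -/
open MeasureTheory Set Filter Topology Function
open scoped ENNReal

/-- The quasi-inverse (quantile function) of a cumulative distribution function:
`F⁽⁻¹⁾(s) = inf { r : F r ≥ s }`. -/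
noncomputable def quasiInverse (F : ℝ → ℝ) (s : ℝ) : ℝ := sInf {r : ℝ | s ≤ F r}

lemma aux_sup (μ : Measure ℝ) (A : Set ℝ) (τ : ℝ) (v : ℝ≥0∞)
    (h : ∀ t, t < τ → μ (A ∩ Iio t) ≤ v) : μ (A ∩ Iio τ) ≤ v := by
  have hmono : Monotone (fun n : ℕ => A ∩ Iio (τ - 1/(n+1))) := by
    intro n m hnm
    apply inter_subset_inter_right
    apply Iio_subset_Iio
    have h1 : (1:ℝ)/(m+1) ≤ 1/(n+1) := by
      apply one_div_le_one_div_of_le (by positivity)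
      exact_mod_cast by omega
    linarith
  have hU : A ∩ Iio τ = ⋃ n : ℕ, A ∩ Iio (τ - 1/(n+1)) := by
    ext y; simp only [mem_inter_iff, mem_iUnion, mem_Iio]
    constructor
    · rintro ⟨hA, hy⟩
      obtain ⟨n, hn⟩ := exists_nat_one_div_lt (sub_pos.2 hy)
      exact ⟨n, hA, by push_cast at hn ⊢; linarith⟩
    · rintro ⟨n, hA, hy⟩
      have : (0:ℝ) < 1/(n+1) := by positivity
      exact ⟨hA, by linarith⟩
  rw [hU, hmono.measure_iUnion]
  refine iSup_le fun n => h _ ?_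
  have : (0:ℝ) < 1/(n+1) := by positivity
  linarith

lemma aux_lip (μ : Measure ℝ) (hμ : μ ≤ volume) (A : Set ℝ) {t t' : ℝ} (h : t ≤ t') :
    μ (A ∩ Iio t') ≤ μ (A ∩ Iio t) + ENNReal.ofReal (t' - t) := by
  have hsub : A ∩ Iio t' ⊆ (A ∩ Iio t) ∪ Ico t t' := by
    rintro y ⟨hA, hy⟩
    by_cases h1 : y < t
    · exact Or.inl ⟨hA, h1⟩
    · exact Or.inr ⟨not_lt.1 h1, hy⟩
  refine (measure_mono hsub).trans ((measure_union_le _ _).trans ?_)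
  gcongr
  calc μ (Ico t t') ≤ volume (Ico t t') := hμ _
  _ = ENNReal.ofReal (t' - t) := Real.volume_Ico

lemma qeval (F : ℝ → ℝ) {x v : ℝ}
    (h1 : ∀ r, r < x → F r < v) (h2 : v ≤ F x) : quasiInverse F v = x := by
  have hub : ∀ r ∈ {r : ℝ | v ≤ F r}, x ≤ r := by
    intro r hr
    by_contra h
    push_neg at h
    exact absurd hr (not_le.2 (h1 r h))
  exact le_antisymm (csInf_le ⟨x, hub⟩ h2) (le_csInf ⟨x, h2⟩ hub)


/-- If `f : (0,1) → ℝ` is Borel with `f_*λ_{(0,1)} = ν_F`, then there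
is a Borel `α : (0,1) → (0,1)` preserving Lebesgue measure with `f = F⁽⁻¹⁾ ∘ α`
Lebesgue-almost everywhere on `(0,1)`. -/
theorem exists_barrier_on_unitInterval
    (F : ℝ → ℝ) (hmono : Monotone F)
    (hrc : ∀ x : ℝ, ContinuousWithinAt F (Ici x) x)
    (hinf : ⨅ r : ℝ, F r = 0) (hsup : ⨆ r : ℝ, F r = 1)
    (f : ℝ → ℝ) (hf : Measurable f)
    (hpush : Measure.map f (volume.restrict (Ioo (0 : ℝ) 1)) =
      ({ toFun := F, mono' := hmono, right_continuous' := hrc } :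
        StieltjesFunction ℝ).measure) :
    ∃ α : ℝ → ℝ, Measurable α ∧ (∀ s ∈ Ioo (0 : ℝ) 1, α s ∈ Ioo (0 : ℝ) 1) ∧
      Measure.map α (volume.restrict (Ioo (0 : ℝ) 1)) = volume.restrict (Ioo (0 : ℝ) 1) ∧
      ∀ᵐ s ∂(volume.restrict (Ioo (0 : ℝ) 1)), f s = quasiInverse F (α s) := by
  classical
  set S : StieltjesFunction ℝ := ⟨F, hmono, hrc⟩ with hS
  set ν : Measure ℝ := S.measure with hν
  set I : Set ℝ := Ioo (0:ℝ) 1 with hI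
  set μ : Measure ℝ := volume.restrict I with hμ
  have hSF : ⇑S = F := rfl
  have hIm : MeasurableSet I := measurableSet_Ioo
  have hμle : μ ≤ volume := Measure.restrict_le_self
  have hμuniv : μ univ = 1 := by
    rw [hμ, Measure.restrict_apply MeasurableSet.univ, univ_inter, hI, Real.volume_Ioo]
    norm_num
  have hνuniv : ν univ = 1 := by
    rw [← hpush, Measure.map_apply hf MeasurableSet.univ, preimage_univ]
    exact hμuniv
  have hpre : ∀ B : Set ℝ, MeasurableSet B → μ (f ⁻¹' B) = ν B := by
    intro B hB
    rw [← hpush, Measure.map_apply hf hB]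
  -- boundedness of F
  have hbddA : BddAbove (range F) := by
    by_contra h
    rw [Real.iSup_of_not_bddAbove h] at hsup
    norm_num at hsup
  have hbddB : BddBelow (range F) := by
    by_contra h
    have : ∃ r, F r < F 0 - 2 := by
      by_contra h2
      push_neg at h2
      exact h ⟨F 0 - 2, fun y ⟨r, hr⟩ => hr ▸ h2 r⟩
    obtain ⟨r, hr⟩ := this
    have h1 : ν (Ioc r 0) ≤ 1 := hνuniv ▸ measure_mono (subset_univ _)
    have h2 : ν (Ioc r 0) = ENNReal.ofReal (F 0 - F r) := S.measure_Ioc r 0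
    rw [h2] at h1
    have : (2:ℝ≥0∞) ≤ ENNReal.ofReal (F 0 - F r) := by
      rw [show (2:ℝ≥0∞) = ENNReal.ofReal 2 by norm_num]
      exact ENNReal.ofReal_le_ofReal (by linarith)
    have := this.trans h1
    norm_num at this
  have hbot : Tendsto F atBot (𝓝 0) := hinf ▸ tendsto_atBot_ciInf hmono hbddB
  have htop : Tendsto F atTop (𝓝 1) := hsup ▸ tendsto_atTop_ciSup hmono hbddA
  have hF0 : ∀ r, 0 ≤ F r := fun r => hinf ▸ ciInf_le hbddB r
  have hF1 : ∀ r, F r ≤ 1 := fun r => hsup ▸ le_ciSup hbddA r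
  have hll_le : ∀ x, leftLim F x ≤ F x := fun x => hmono.leftLim_le le_rfl
  have hll0 : ∀ x, 0 ≤ leftLim F x := by
    intro x
    have := hmono.le_leftLim (show x - 1 < x by linarith)
    linarith [hF0 (x-1)]
  have hνIic : ∀ x, ν (Iic x) = ENNReal.ofReal (F x) := by
    intro x
    rw [hν, S.measure_Iic hbot x, sub_zero]
  haveI : IsFiniteMeasure ν := ⟨by rw [hνuniv]; exact ENNReal.one_lt_top⟩
  have hνIoi : ∀ x, ν (Ioi x) = 1 - ENNReal.ofReal (F x) := by
    intro x
    rw [← compl_Iic, measure_compl measurableSet_Iic (measure_ne_top _ _), hνuniv, hνIic]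
  have hνIio : ∀ x, ν (Iio x) = ENNReal.ofReal (leftLim F x) := by
    intro x
    have hx1 : leftLim F x ≤ 1 := le_trans (hll_le x) (hF1 x)
    have key : (1:ℝ≥0∞) = ENNReal.ofReal (leftLim F x) + ENNReal.ofReal (1 - leftLim F x) := by
      rw [← ENNReal.ofReal_add (hll0 x) (by linarith)]
      norm_num
    rw [← compl_Ici, measure_compl measurableSet_Ici (measure_ne_top _ _), hνuniv, hν,
      S.measure_Ici htop x]
    exact ENNReal.sub_eq_of_eq_add ENNReal.ofReal_ne_top key
  have hνsing : ∀ x, ν {x} = ENNReal.ofReal (F x - leftLim F x) := fun x => S.measure_singleton x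
  -- fibers and the running-measure function
  set A : ℝ → Set ℝ := fun x => f ⁻¹' {x} with hA
  have hAm : ∀ x, MeasurableSet (A x) := fun x => hf (measurableSet_singleton x)
  set g : ℝ → ℝ → ℝ≥0∞ := fun x t => μ (A x ∩ Iio t) with hg
  have hgmono : ∀ x, Monotone (g x) := by
    intro x t t' htt'
    exact measure_mono (inter_subset_inter_right _ (Iio_subset_Iio htt'))
  have hgle : ∀ x t, g x t ≤ μ (A x) := fun x t => measure_mono inter_subset_left
  have hμA : ∀ x, μ (A x) = ENNReal.ofReal (F x - leftLim F x) := by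
    intro x
    rw [hμ, ← hνsing x, ← hpre _ (measurableSet_singleton x), hμ]
  have hgfin : ∀ x t, g x t ≠ ∞ :=
    fun x t => ((hgle x t).trans_lt ((hμA x).symm ▸ ENNReal.ofReal_lt_top)).ne
  have hμAfin : ∀ x, μ (A x) ≠ ∞ := fun x => (hμA x).symm ▸ ENNReal.ofReal_ne_top
  -- α₀
  set α₀ : ℝ → ℝ := fun s => leftLim F (f s) + (g (f s) s).toReal with hα₀
  have hllm : Measurable (leftLim F) := (hmono.leftLim).measurable
  have hα₀m : Measurable α₀ := by
    have hT : MeasurableSet {p : (ℝ × ℝ) × ℝ | f p.2 = p.1.1 ∧ p.2 < p.1.2} := by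
      apply MeasurableSet.inter
      · exact measurableSet_eq_fun (hf.comp (measurable_snd)) (measurable_fst.comp measurable_fst)
      · exact measurableSet_lt measurable_snd (measurable_snd.comp measurable_fst)
    have hmm : Measurable fun q : ℝ × ℝ => μ (Prod.mk q ⁻¹' {p : (ℝ × ℝ) × ℝ | f p.2 = p.1.1 ∧ p.2 < p.1.2}) :=
      measurable_measure_prodMk_left hT
    have heq : ∀ s : ℝ, (Prod.mk (f s, s) ⁻¹' {p : (ℝ × ℝ) × ℝ | f p.2 = p.1.1 ∧ p.2 < p.1.2}) = A (f s) ∩ Iio s := by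
      intro s
      ext u
      simp [hA, eq_comm, and_comm]
    have h2 : Measurable fun s => g (f s) s := by
      have h3 := hmm.comp (hf.prodMk measurable_id)
      have h4 : (fun s => g (f s) s) = fun s =>
          μ (Prod.mk (f s, s) ⁻¹' {p : (ℝ × ℝ) × ℝ | f p.2 = p.1.1 ∧ p.2 < p.1.2}) := by
        funext s
        rw [heq s]
      rw [h4]
      exact h3
    exact (hllm.comp hf).add (h2.ennreal_toReal)
  -- the final map
  set α : ℝ → ℝ := fun s => if α₀ s ∈ I then α₀ s else 1/2 with hα
  have hαm : Measurable α := Measurable.ite (hα₀m hIm) hα₀m measurable_const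
  have hαI : ∀ s, α s ∈ I := by
    intro s
    by_cases h : α₀ s ∈ I
    · simp only [hα]
      rw [if_pos h]
      exact h
    · simp only [hα]
      rw [if_neg h]
      rw [hI]
      constructor <;> norm_num
  -- the set where F is flat to the left, covered by rational-indexed flat pieces
  set C : ℚ → Set ℝ := fun q => Ioi (q:ℝ) ∩ F ⁻¹' (Iic (F q)) with hC
  have hCm : ∀ q, MeasurableSet (C q) :=
    fun q => measurableSet_Ioi.inter (hmono.measurable measurableSet_Iic)
  have hCmem : ∀ (q : ℚ) (y : ℝ), y ∈ C q ↔ ((q:ℝ) < y ∧ F y = F q) := by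
    intro q y
    constructor
    · rintro ⟨h1, h2⟩
      exact ⟨h1, le_antisymm h2 (hmono (le_of_lt h1))⟩
    · rintro ⟨h1, h2⟩
      exact ⟨h1, le_of_eq h2⟩
  have hνC : ∀ q, ν (C q) = 0 := by
    intro q
    rcases eq_empty_or_nonempty (C q) with h | hne
    · rw [h]; exact measure_empty
    by_cases hbdd : BddAbove (C q)
    · set b := sSup (C q) with hb
      have hbq : (q:ℝ) < b := by
        obtain ⟨y, hy⟩ := hne
        exact lt_of_lt_of_le ((hCmem q y).1 hy).1 (le_csSup hbdd hy)
      have hconst : ∀ y ∈ Ioo (q:ℝ) b, F y = F q := by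
        rintro y ⟨h1, h2⟩
        obtain ⟨y', hy', hyy'⟩ := exists_lt_of_lt_csSup hne h2
        have h3 := ((hCmem q y').1 hy').2
        exact le_antisymm (h3 ▸ hmono hyy'.le) (hmono h1.le)
      have hll : leftLim F b ≤ F q := by
        apply le_of_tendsto (hmono.tendsto_leftLim b)
        filter_upwards [Ioo_mem_nhdsLT_of_mem (show b ∈ Ioc (q:ℝ) b from ⟨hbq, le_rfl⟩)] with y hy
        exact le_of_eq (hconst y hy)
      have hIoo : ν (Ioo (q:ℝ) b) = 0 := by
        rw [hν, S.measure_Ioo]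
        simp only [ENNReal.ofReal_eq_zero]
        show leftLim F b - F q ≤ 0
        linarith
      by_cases hbC : b ∈ C q
      · have hFb : F b = F q := ((hCmem q b).1 hbC).2
        have hmid : F ((q+b)/2) = F q := hconst _ ⟨by linarith, by linarith⟩
        have hsing : ν {b} = 0 := by
          rw [hνsing]
          simp only [ENNReal.ofReal_eq_zero]
          have := hmono.le_leftLim (show (q+b)/2 < b by linarith)
          linarith
        have hsub : C q ⊆ Ioo (q:ℝ) b ∪ {b} := by
          intro y hy
          rcases lt_or_eq_of_le (le_csSup hbdd hy) with h3 | h3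
          · exact Or.inl ⟨((hCmem q y).1 hy).1, h3⟩
          · exact Or.inr (by simp [h3]; rfl)
        exact measure_mono_null hsub (measure_union_null hIoo hsing)
      · have hsub : C q ⊆ Ioo (q:ℝ) b := by
          intro y hy
          rcases lt_or_eq_of_le (le_csSup hbdd hy) with h3 | h3
          · exact ⟨((hCmem q y).1 hy).1, h3⟩
          · rw [← hb] at h3
            rw [h3] at hy
            exact absurd hy hbC
        exact measure_mono_null hsub hIoo
    · have hFq : F q = 1 := by
        have hle : ∀ r, F r ≤ F q := by
          intro r
          obtain ⟨y, hy, hry⟩ := not_bddAbove_iff.1 hbdd r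
          exact le_trans (hmono hry.le) (le_of_eq ((hCmem q y).1 hy).2)
        have h1 : (1:ℝ) ≤ F q := by
          calc (1:ℝ) = ⨆ r, F r := hsup.symm
          _ ≤ F q := ciSup_le hle
        linarith [hF1 q]
      have hIoi : ν (Ioi (q:ℝ)) = 0 := by
        rw [hνIoi, hFq]
        simp
      exact measure_mono_null (fun y hy => ((hCmem q y).1 hy).1) hIoi
  set NB : Set ℝ := ⋃ q : ℚ, C q with hNB
  have hNBm : MeasurableSet NB := MeasurableSet.iUnion hCm
  have hνNB : ν NB = 0 := measure_iUnion_null hνC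
  have hNBprop : ∀ y : ℝ, y ∉ NB → ∀ r, r < y → F r < F y := by
    intro y hy r hr
    rcases lt_or_ge (F r) (F y) with h | h
    · exact h
    exfalso
    have hFeq : F r = F y := le_antisymm (hmono hr.le) h
    obtain ⟨q, hq1, hq2⟩ := exists_rat_btwn hr
    apply hy
    refine mem_iUnion.2 ⟨q, (hCmem q y).2 ⟨hq2, ?_⟩⟩
    have h1 : F r ≤ F q := hmono hq1.le
    have h2 : F q ≤ F y := hmono hq2.le
    linarith
  -- the set where the left limit is already 1
  set B₁ : Set ℝ := {y | 1 ≤ leftLim F y} with hB₁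
  have hB₁m : MeasurableSet B₁ := hllm measurableSet_Ici
  have hνB₁ : ν B₁ = 0 := by
    rcases eq_empty_or_nonempty B₁ with h | hne
    · rw [h]; exact measure_empty
    have hbdd : BddBelow B₁ := by
      obtain ⟨y₀, hy₀⟩ : ∃ y₀, F y₀ < 1 := (hbot.eventually (eventually_lt_nhds one_pos)).exists
      refine ⟨y₀, fun y hy => ?_⟩
      by_contra h
      push_neg at h
      have : F y ≤ F y₀ := hmono h.le
      have : leftLim F y < 1 := by linarith [hll_le y]
      exact absurd hy (by simpa [hB₁] using not_le.2 this)
    set b := sInf B₁ with hb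
    have hup : ∀ y, b < y → F y = 1 := by
      intro y hy
      obtain ⟨y', hy', hy'2⟩ := exists_lt_of_csInf_lt hne hy
      have h1 : (1:ℝ) ≤ leftLim F y := le_trans hy' (hmono.leftLim hy'2.le)
      linarith [hll_le y, hF1 y]
    have hFb : F b = 1 := by
      have h1 : Tendsto F (𝓝[>] b) (𝓝 (F b)) :=
        (hrc b).mono_left (nhdsWithin_mono b Ioi_subset_Ici_self)
      have h2 : Tendsto F (𝓝[>] b) (𝓝 1) := by
        apply Tendsto.congr' _ tendsto_const_nhds
        filter_upwards [self_mem_nhdsWithin] with y hy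
        exact (hup y hy).symm
      exact tendsto_nhds_unique h1 h2
    by_cases hbB : (1:ℝ) ≤ leftLim F b
    · have h0 : ν (Ici b) = 0 := by
        rw [hν, S.measure_Ici htop b]
        simp only [ENNReal.ofReal_eq_zero]
        show (1:ℝ) - leftLim F b ≤ 0
        linarith
      exact measure_mono_null (fun y hy => csInf_le hbdd hy) h0
    · have hsub2 : B₁ ⊆ Ioi b := by
        intro y hy
        rcases eq_or_lt_of_le (csInf_le hbdd hy) with h | h
        · rw [hb, h] at hbB
          exact absurd hy hbB
        · exact h
      have h0 : ν (Ioi b) = 0 := by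
        rw [hνIoi, hFb]
        simp
      exact measure_mono_null hsub2 h0
  -- elementary facts about g
  have hg0 : ∀ x, g x 0 = 0 := by
    intro x
    have hempty : Iio (0:ℝ) ∩ I = ∅ := by
      ext y
      simp only [mem_inter_iff, mem_Iio, hI, mem_Ioo, mem_empty_iff_false, iff_false, not_and]
      intro h1 h2
      linarith
    apply measure_mono_null (inter_subset_right : A x ∩ Iio 0 ⊆ Iio 0)
    rw [hμ, Measure.restrict_apply' hIm, hempty]
    exact measure_empty
  have hg1 : ∀ x, g x 1 = μ (A x) := by
    intro x
    have hgr : g x 1 = μ (A x ∩ Iio 1) := rfl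
    rw [hgr, hμ, Measure.restrict_apply' hIm, Measure.restrict_apply' hIm]
    congr 1
    ext y
    simp only [mem_inter_iff, mem_Iio, hI, mem_Ioo]
    constructor
    · rintro ⟨⟨h1, _⟩, h3⟩
      exact ⟨h1, h3⟩
    · rintro ⟨h1, h2, h3⟩
      exact ⟨⟨h1, h3⟩, h2, h3⟩
  have hsingμ : ∀ t : ℝ, μ {t} = 0 :=
    fun t => le_antisymm (le_trans (hμle {t}) (le_of_eq (Real.volume_singleton))) zero_le
  -- the bottom of each fiber (where g = 0) is null
  have hD : ∀ x, μ (A x ∩ {s | g x s = 0}) = 0 := by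
    intro x
    set T : Set ℝ := {t | g x t = 0} with hT
    have hTne : T.Nonempty := ⟨0, hg0 x⟩
    by_cases hbdd : BddAbove T
    · set τ := sSup T with hτdef
      have hdown : ∀ t, t < τ → g x t = 0 := by
        intro t ht
        obtain ⟨t', ht', htt'⟩ := exists_lt_of_lt_csSup hTne ht
        exact le_antisymm (le_trans (hgmono x htt'.le) (le_of_eq ht')) zero_le
      have hτ0 : g x τ = 0 :=
        le_antisymm (aux_sup μ (A x) τ 0 (fun t ht => le_of_eq (hdown t ht))) zero_le
      have hsub : A x ∩ T ⊆ (A x ∩ Iio τ) ∪ {τ} := by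
        rintro s ⟨hs1, hs2⟩
        rcases lt_or_eq_of_le (le_csSup hbdd hs2) with h | h
        · exact Or.inl ⟨hs1, h⟩
        · exact Or.inr (by simp [h]; rfl)
      exact measure_mono_null hsub (measure_union_null hτ0 (hsingμ τ))
    · obtain ⟨t', ht', h1t'⟩ := not_bddAbove_iff.1 hbdd 1
      have hA0 : μ (A x) = 0 := by
        rw [← hg1 x]
        exact le_antisymm (le_trans (hgmono x h1t'.le) (le_of_eq ht')) zero_le
      exact measure_mono_null inter_subset_left hA0
  -- the top of each fiber (where g has attained its total) is null
  have hD' : ∀ x, μ (A x ∩ {s | g x s = μ (A x)}) = 0 := by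
    intro x
    by_cases hpos : μ (A x) = 0
    · exact measure_mono_null inter_subset_left hpos
    set T : Set ℝ := {t | g x t = μ (A x)} with hT
    have hTne : T.Nonempty := ⟨1, hg1 x⟩
    have hTbdd : BddBelow T := by
      refine ⟨0, fun t ht => ?_⟩
      by_contra h
      push_neg at h
      have h1 : g x t ≤ g x 0 := hgmono x h.le
      rw [hg0 x] at h1
      exact hpos (by rw [← ht]; exact le_antisymm h1 zero_le)
    set τ := sInf T with hτdef
    have hτ : g x τ = μ (A x) := by
      refine le_antisymm (hgle x τ) ?_
      refine ENNReal.le_of_forall_pos_le_add (fun ε hε hfin => ?_)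
      obtain ⟨t, ht, htτ⟩ := exists_lt_of_csInf_lt hTne
        (lt_add_of_pos_right τ (by exact_mod_cast hε : (0:ℝ) < (ε:ℝ)))
      have hτt : τ ≤ t := csInf_le hTbdd ht
      calc μ (A x) = g x t := ht.symm
      _ ≤ g x τ + ENNReal.ofReal (t - τ) := aux_lip μ hμle (A x) hτt
      _ ≤ g x τ + (ε : ℝ≥0∞) := by
          gcongr
          rw [← ENNReal.ofReal_coe_nnreal]
          exact ENNReal.ofReal_le_ofReal (by linarith)
    have hkey := measure_inter_add_diff (A x) (measurableSet_Iio (a := τ)) (μ := μ)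
    have hdiff0 : μ (A x \ Iio τ) = 0 := by
      have hgr2 : g x τ = μ (A x ∩ Iio τ) := rfl
      have h2 : g x τ + μ (A x \ Iio τ) = g x τ + 0 := by
        rw [add_zero, hgr2, hkey, ← hτ]
      exact (ENNReal.add_right_inj (hgfin x τ)).1 h2
    have hsub : A x ∩ T ⊆ A x \ Iio τ := by
      rintro s ⟨hs1, hs2⟩
      exact ⟨hs1, not_lt.2 (csInf_le hTbdd hs2)⟩
    exact measure_mono_null hsub hdiff0
  -- countability of atoms
  have hatoms : Set.Countable {x : ℝ | 0 < μ (A x)} := by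
    have h1 := Measure.countable_meas_level_set_pos₀ (μ := μ) (g := f) hf.nullMeasurable
    have h2 : {x : ℝ | 0 < μ (A x)} = {t : ℝ | 0 < μ {a : ℝ | f a = t}} := by
      ext x
      have : A x = {a : ℝ | f a = x} := by
        ext a
        simp [hA]
      rw [mem_setOf_eq, this]
      rfl
    rw [h2]
    exact h1
  -- the global bad set
  set Bad : Set ℝ := f ⁻¹' (NB ∪ B₁) ∪
      (⋃ x ∈ {x : ℝ | 0 < μ (A x)},
        (A x ∩ {s | g x s = 0}) ∪ (A x ∩ {s | g x s = μ (A x)})) with hBad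
  have hBadnull : μ Bad = 0 := by
    apply measure_union_null
    · rw [hpre _ (hNBm.union hB₁m)]
      exact measure_union_null hνNB hνB₁
    · exact (measure_biUnion_null_iff hatoms).2
        (fun x _ => measure_union_null (hD x) (hD' x))
  -- the key pointwise claim
  have hgood : ∀ s, s ∈ I → s ∉ Bad → (α₀ s ∈ I ∧ f s = quasiInverse F (α₀ s)) := by
    intro s hsI hsBad
    rw [hBad] at hsBad
    simp only [mem_union, mem_preimage, not_or, mem_iUnion, not_exists] at hsBad
    obtain ⟨⟨hnotNB, hnotB₁⟩, hnotatom⟩ := hsBad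
    by_cases hpos : μ (A (f s)) = 0
    · -- continuous part
      have hg0' : g (f s) s = 0 :=
        le_antisymm (le_trans (hgle (f s) s) (le_of_eq hpos)) zero_le
      have hFeq : F (f s) = leftLim F (f s) := by
        rw [hμA] at hpos
        rw [ENNReal.ofReal_eq_zero] at hpos
        linarith [hll_le (f s)]
      have hαval : α₀ s = F (f s) := by
        simp only [hα₀, hg0', ENNReal.toReal_zero, add_zero, hFeq]
      have hstrict : ∀ r, r < f s → F r < F (f s) := hNBprop (f s) hnotNB
      have hqi : quasiInverse F (F (f s)) = f s := qeval F hstrict le_rfl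
      have hFpos : 0 < F (f s) := by
        have h1 := hstrict (f s - 1) (by linarith)
        linarith [hF0 (f s - 1)]
      have hFlt1 : F (f s) < 1 := by
        have h2 : ¬ (1:ℝ) ≤ leftLim F (f s) := hnotB₁
        push_neg at h2
        linarith
      refine ⟨?_, ?_⟩
      · rw [hαval, hI]
        exact ⟨hFpos, hFlt1⟩
      · rw [hαval, hqi]
    · -- atom part
      have hxatom : f s ∈ {x : ℝ | 0 < μ (A x)} := pos_iff_ne_zero.2 hpos
      have hsA : s ∈ A (f s) := by
        simp [hA]
      have hnot := hnotatom (f s)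
      have hnot2 := hnot hxatom
      simp only [mem_union, not_or, mem_inter_iff, mem_setOf_eq, not_and] at hnot2
      obtain ⟨hn1, hn2⟩ := hnot2
      have hgne0 : g (f s) s ≠ 0 := hn1 hsA
      have hgneA : g (f s) s ≠ μ (A (f s)) := hn2 hsA
      have htpos : 0 < (g (f s) s).toReal :=
        ENNReal.toReal_pos hgne0 (hgfin (f s) s)
      have htlt : (g (f s) s).toReal < F (f s) - leftLim F (f s) := by
        have h1 : g (f s) s < μ (A (f s)) := lt_of_le_of_ne (hgle (f s) s) hgneA
        have h2 := ENNReal.toReal_lt_toReal (hgfin (f s) s) (hμAfin (f s))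
        have h3 := h2.2 h1
        rwa [hμA, ENNReal.toReal_ofReal (by linarith [hll_le (f s)])] at h3
      have hlow : leftLim F (f s) < α₀ s := by
        simp only [hα₀]
        linarith
      have hhigh : α₀ s < F (f s) := by
        simp only [hα₀]
        linarith
      have hqi : quasiInverse F (α₀ s) = f s := by
        apply qeval F
        · intro r hr
          exact lt_of_le_of_lt (hmono.le_leftLim hr) hlow
        · exact le_of_lt hhigh
      refine ⟨?_, hqi.symm⟩
      rw [hI]
      constructor
      · linarith [hll0 (f s)]
      · linarith [hF1 (f s)]
  -- almost-everywhere statements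
  have hae1 : ∀ᵐ s ∂μ, s ∈ I := by
    rw [hμ]
    exact ae_restrict_mem hIm
  have hae2 : ∀ᵐ s ∂μ, s ∉ Bad := measure_eq_zero_iff_ae_notMem.mp hBadnull
  have haeq : ∀ᵐ s ∂μ, α s = α₀ s ∧ f s = quasiInverse F (α s) := by
    filter_upwards [hae1, hae2] with s h1 h2
    obtain ⟨hIn, hid⟩ := hgood s h1 h2
    have heq : α s = α₀ s := by
      simp only [hα]
      rw [if_pos hIn]
    refine ⟨heq, ?_⟩
    rw [heq]
    exact hid
  have haeα : ∀ᵐ s ∂μ, α s = α₀ s := haeq.mono fun s h => h.1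
  refine ⟨α, hαm, fun s _ => hαI s, ?_, haeq.mono fun s h => h.2⟩
  -- the pushforward property
  haveI : IsFiniteMeasure μ := ⟨by rw [hμuniv]; exact ENNReal.one_lt_top⟩
  haveI : IsFiniteMeasure (Measure.map α μ) := by
    constructor
    rw [Measure.map_apply hαm MeasurableSet.univ, preimage_univ, hμuniv]
    exact ENNReal.one_lt_top
  have hμI' : ∀ E : Set ℝ, μ E = μ (E ∩ I) := by
    intro E
    rw [hμ, Measure.restrict_apply' hIm, Measure.restrict_apply' hIm, inter_assoc, inter_self]
  apply MeasureTheory.Measure.ext_of_Iic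
  intro u
  rw [Measure.map_apply hαm measurableSet_Iic]
  have hgoal : ∀ E E' : Set ℝ, E ∩ I = E' ∩ I → μ E = μ E' := by
    intro E E' h
    rw [hμI' E, hμI' E', h]
  rcases le_or_gt u 0 with hu | hu
  · apply hgoal
    have h1 : α ⁻¹' Iic u ∩ I = ∅ := by
      ext s
      simp only [mem_inter_iff, mem_preimage, mem_Iic, mem_empty_iff_false, iff_false, not_and]
      intro hs hsI
      have h2 : 0 < α s := (hαI s).1
      linarith
    have h2 : Iic u ∩ I = ∅ := by
      apply eq_empty_iff_forall_notMem.2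
      rintro s ⟨hs, hsI⟩
      rw [hI, mem_Ioo] at hsI
      rw [mem_Iic] at hs
      linarith [hsI.1]
    rw [h1, h2]
  rcases le_or_gt 1 u with hu1 | hu1
  · apply hgoal
    have h1 : α ⁻¹' Iic u ∩ I = I := by
      apply inter_eq_right.2
      intro s _
      rw [mem_preimage, mem_Iic]
      have h2 : α s < 1 := (hαI s).2
      linarith
    have h2 : Iic u ∩ I = I := by
      apply inter_eq_right.2
      intro s hs
      rw [hI, mem_Ioo] at hs
      rw [mem_Iic]
      linarith [hs.2]
    rw [h1, h2]
  -- main case : 0 < u < 1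
  have hRHS : μ (Iic u) = ENNReal.ofReal u := by
    rw [hμ, Measure.restrict_apply' hIm]
    have hIoc : Iic u ∩ I = Ioc 0 u := by
      ext s
      simp only [mem_inter_iff, mem_Iic, hI, mem_Ioo, mem_Ioc]
      constructor
      · rintro ⟨h1, h2, _⟩
        exact ⟨h2, h1⟩
      · rintro ⟨h1, h2⟩
        exact ⟨h2, h1, by linarith⟩
    rw [hIoc, Real.volume_Ioc, sub_zero]
  have hαset : μ (α ⁻¹' Iic u) = μ (α₀ ⁻¹' Iic u) := by
    apply measure_congr
    apply eventuallyEq_set.2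
    filter_upwards [haeα] with s h
    rw [mem_preimage, mem_preimage, mem_Iic, mem_Iic, h]
  -- the quantile point of u
  set x := quasiInverse F u with hxdef
  have hset_ne : {r : ℝ | u ≤ F r}.Nonempty := by
    obtain ⟨r, hr⟩ := (htop.eventually (eventually_gt_nhds hu1)).exists
    exact ⟨r, le_of_lt hr⟩
  have hbddb : BddBelow {r : ℝ | u ≤ F r} := by
    obtain ⟨r₀, hr₀⟩ : ∃ r₀, F r₀ < u := (hbot.eventually (eventually_lt_nhds hu)).exists
    refine ⟨r₀, fun r hr => ?_⟩
    by_contra h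
    push_neg at h
    have h6 : F r ≤ F r₀ := hmono h.le
    rw [mem_setOf_eq] at hr
    linarith
  have hxlb : ∀ r ∈ {r : ℝ | u ≤ F r}, x ≤ r := fun r hr => csInf_le hbddb hr
  have hFx : u ≤ F x := by
    have hev : ∀ y ∈ Ioi x, u ≤ F y := by
      intro y hy
      obtain ⟨r, hr, hry⟩ := exists_lt_of_csInf_lt hset_ne hy
      exact le_trans hr (hmono hry.le)
    have h1 : Tendsto F (𝓝[>] x) (𝓝 (F x)) :=
      (hrc x).mono_left (nhdsWithin_mono x Ioi_subset_Ici_self)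
    exact ge_of_tendsto h1 (eventually_nhdsWithin_of_forall hev)
  have hllx : leftLim F x ≤ u := by
    apply le_of_tendsto (hmono.tendsto_leftLim x)
    apply eventually_nhdsWithin_of_forall
    intro y hy
    by_contra h
    push_neg at h
    exact absurd (hxlb y (le_of_lt h)) (not_le.2 hy)
  set v : ℝ≥0∞ := ENNReal.ofReal (u - leftLim F x) with hv
  have hvfin : v ≠ ∞ := ENNReal.ofReal_ne_top
  have hvle : v ≤ μ (A x) := by
    rw [hμA]
    exact ENNReal.ofReal_le_ofReal (by linarith)
  have hS1 : μ (f ⁻¹' Iio x) = ENNReal.ofReal (leftLim F x) := by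
    rw [hpre _ measurableSet_Iio, hνIio]
  have hS2 : μ (A x ∩ {s | g x s ≤ v}) = v := by
    rcases eq_or_lt_of_le hvle with heq | hlt
    · have hall : A x ∩ {s | g x s ≤ v} = A x := by
        apply inter_eq_left.2
        intro s _
        rw [mem_setOf_eq, heq]
        exact hgle x s
      rw [hall, ← heq]
    · set T := {t : ℝ | g x t ≤ v} with hTdef
      have hTne : T.Nonempty := ⟨0, by rw [mem_setOf_eq, hg0 x]; exact zero_le⟩
      have hTbdd : BddAbove T := by
        refine ⟨1, fun t ht => ?_⟩
        by_contra h
        push_neg at h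
        have h1 : μ (A x) ≤ g x t := by
          rw [← hg1 x]
          exact hgmono x h.le
        rw [hTdef, mem_setOf_eq] at ht
        exact absurd (lt_of_le_of_lt (h1.trans ht) hlt) (lt_irrefl _)
      set τ := sSup T with hτdef
      have hdown : ∀ t, t < τ → g x t ≤ v := by
        intro t ht
        obtain ⟨t', ht', htt'⟩ := exists_lt_of_lt_csSup hTne ht
        exact le_trans (hgmono x htt'.le) ht'
      have hτle : g x τ ≤ v := aux_sup μ (A x) τ v hdown
      have hτge : v ≤ g x τ := by
        refine ENNReal.le_of_forall_pos_le_add (fun ε hε hfin => ?_)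
        have hεpos : (0:ℝ) < (ε:ℝ) := by exact_mod_cast hε
        have hnotT : τ + (ε:ℝ)/2 ∉ T := by
          intro hmem
          have := le_csSup hTbdd hmem
          linarith
        rw [hTdef, mem_setOf_eq] at hnotT
        have hgt : v < g x (τ + (ε:ℝ)/2) := not_le.1 hnotT
        calc v ≤ g x (τ + (ε:ℝ)/2) := le_of_lt hgt
        _ ≤ g x τ + ENNReal.ofReal ((τ + (ε:ℝ)/2) - τ) := aux_lip μ hμle (A x) (by linarith)
        _ ≤ g x τ + (ε:ℝ≥0∞) := by
            gcongr
            rw [← ENNReal.ofReal_coe_nnreal]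
            exact ENNReal.ofReal_le_ofReal (by linarith)
      have hτv : g x τ = v := le_antisymm hτle hτge
      apply le_antisymm
      · have hsub : A x ∩ T ⊆ (A x ∩ Iio τ) ∪ {τ} := by
          rintro s ⟨hs1, hs2⟩
          rcases lt_or_eq_of_le (le_csSup hTbdd hs2) with h | h
          · exact Or.inl ⟨hs1, h⟩
          · exact Or.inr (by simp [h]; rfl)
        calc μ (A x ∩ T) ≤ μ ((A x ∩ Iio τ) ∪ {τ}) := measure_mono hsub
        _ ≤ μ (A x ∩ Iio τ) + μ {τ} := measure_union_le _ _
        _ = v := by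
            rw [hsingμ τ, add_zero]
            exact hτv
      · have hsub2 : A x ∩ Iio τ ⊆ A x ∩ T := by
          rintro s ⟨hs1, hs2⟩
          exact ⟨hs1, hdown s hs2⟩
        calc v = g x τ := hτv.symm
        _ ≤ μ (A x ∩ T) := measure_mono hsub2
  have hS2m : MeasurableSet (A x ∩ {s | g x s ≤ v}) :=
    (hAm x).inter ((hgmono x).measurable measurableSet_Iic)
  have hsub_le : α₀ ⁻¹' Iic u ∩ I ⊆ (f ⁻¹' Iio x ∪ (A x ∩ {s | g x s ≤ v})) ∪ Bad := by
    rintro s ⟨hs, _⟩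
    rw [mem_preimage, mem_Iic] at hs
    have hα₀s : α₀ s = leftLim F (f s) + (g (f s) s).toReal := rfl
    rcases lt_trichotomy (f s) x with h | h | h
    · exact Or.inl (Or.inl h)
    · refine Or.inl (Or.inr ⟨by simp [hA, h], ?_⟩)
      rw [mem_setOf_eq, hv]
      rw [ENNReal.le_ofReal_iff_toReal_le (hgfin x s) (by linarith)]
      rw [hα₀s, h] at hs
      linarith
    · right
      have hge0 : (0:ℝ) ≤ (g (f s) s).toReal := ENNReal.toReal_nonneg
      have hyu : leftLim F (f s) ≤ u := by
        rw [hα₀s] at hs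
        linarith
      have hxy : F x ≤ leftLim F (f s) := hmono.le_leftLim h
      have heq1 : leftLim F (f s) = u := le_antisymm hyu (le_trans hFx hxy)
      have heqFx : F x = u := le_antisymm (by linarith) hFx
      have hgy0 : g (f s) s = 0 := by
        have h3 : (g (f s) s).toReal ≤ 0 := by
          rw [hα₀s] at hs
          linarith
        have h4 : (g (f s) s).toReal = 0 := le_antisymm h3 hge0
        rcases (ENNReal.toReal_eq_zero_iff _).1 h4 with h5 | h5
        · exact h5
        · exact absurd h5 (hgfin (f s) s)
      by_cases hposy : μ (A (f s)) = 0
      · have hFy : F (f s) = leftLim F (f s) := by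
          rw [hμA, ENNReal.ofReal_eq_zero] at hposy
          linarith [hll_le (f s)]
        obtain ⟨q, hq1, hq2⟩ := exists_rat_btwn h
        have hFq : F (q:ℝ) = u :=
          le_antisymm ((hmono.le_leftLim hq2).trans_eq heq1) (heqFx ▸ hmono hq1.le)
        refine Or.inl (Or.inl (mem_iUnion.2 ⟨q, (hCmem q (f s)).2 ⟨hq2, ?_⟩⟩))
        rw [hFy, heq1, hFq]
      · refine Or.inr (mem_biUnion (pos_iff_ne_zero.2 hposy) ?_)
        exact Or.inl ⟨by simp [hA], hgy0⟩
  have hsub_ge1 : f ⁻¹' Iio x ⊆ α₀ ⁻¹' Iic u := by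
    intro s hs
    rw [mem_preimage, mem_Iio] at hs
    rw [mem_preimage, mem_Iic]
    have h1 : (g (f s) s).toReal ≤ F (f s) - leftLim F (f s) := by
      calc (g (f s) s).toReal ≤ (μ (A (f s))).toReal :=
            ENNReal.toReal_mono (hμAfin _) (hgle _ s)
      _ = F (f s) - leftLim F (f s) := by
          rw [hμA]
          exact ENNReal.toReal_ofReal (by linarith [hll_le (f s)])
    have h2 : F (f s) ≤ leftLim F x := hmono.le_leftLim hs
    show leftLim F (f s) + (g (f s) s).toReal ≤ u
    linarith
  have hsub_ge2 : A x ∩ {s | g x s ≤ v} ⊆ α₀ ⁻¹' Iic u := by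
    rintro s ⟨hs1, hs2⟩
    have hfs : f s = x := hs1
    rw [mem_setOf_eq] at hs2
    rw [mem_preimage, mem_Iic]
    have h3 : (g x s).toReal ≤ u - leftLim F x := by
      have h4 : (g x s).toReal ≤ v.toReal := ENNReal.toReal_mono hvfin hs2
      rwa [hv, ENNReal.toReal_ofReal (by linarith)] at h4
    show leftLim F (f s) + (g (f s) s).toReal ≤ u
    rw [hfs]
    linarith
  have hdisj : Disjoint (f ⁻¹' Iio x) (A x ∩ {s | g x s ≤ v}) := by
    rw [disjoint_left]
    intro s hs1 hs2
    have h5 : f s = x := hs2.1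
    rw [mem_preimage, mem_Iio, h5] at hs1
    exact lt_irrefl x hs1
  have hpart : μ (α₀ ⁻¹' Iic u) = ENNReal.ofReal (leftLim F x) + v := by
    apply le_antisymm
    · calc μ (α₀ ⁻¹' Iic u) = μ (α₀ ⁻¹' Iic u ∩ I) := hμI' _
      _ ≤ μ ((f ⁻¹' Iio x ∪ (A x ∩ {s | g x s ≤ v})) ∪ Bad) := measure_mono hsub_le
      _ ≤ μ (f ⁻¹' Iio x ∪ (A x ∩ {s | g x s ≤ v})) + μ Bad := measure_union_le _ _
      _ = μ (f ⁻¹' Iio x ∪ (A x ∩ {s | g x s ≤ v})) := by rw [hBadnull, add_zero]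
      _ ≤ μ (f ⁻¹' Iio x) + μ (A x ∩ {s | g x s ≤ v}) := measure_union_le _ _
      _ = ENNReal.ofReal (leftLim F x) + v := by rw [hS1, hS2]
    · calc ENNReal.ofReal (leftLim F x) + v
          = μ (f ⁻¹' Iio x) + μ (A x ∩ {s | g x s ≤ v}) := by rw [hS1, hS2]
      _ = μ (f ⁻¹' Iio x ∪ (A x ∩ {s | g x s ≤ v})) := (measure_union hdisj hS2m).symm
      _ ≤ μ (α₀ ⁻¹' Iic u) := measure_mono (union_subset hsub_ge1 hsub_ge2)
  rw [hαset, hpart, hRHS, hv, ← ENNReal.ofReal_add (hll0 x) (by linarith)]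
  congr 1
  ring
end

section
/- Let F : ℝ → ℝ be nondecreasing, right-continuous, with infimum 0 and supremum 1, let μ be a probability measure on a measurable space Z, let f : Z → ℝ be Borel with f_*μ = ν_F, and suppose f = F^{(-1)} ∘ α for a Borel function α : Z → (0,1) with α_*μ = λ_{(0,1)}. Then for all reals a < b: μ(f⁻¹((a,b])) = 0 if and only if f⁻¹((a,b]) = ∅. -/
open MeasureTheory Set

/-!
For a level `s` strictly between `inf F` and `sup F` the set `{r | s ≤ F r}` is a nonempty
ray bounded below, closed at its left end by right-continuity, so
`F a < s ≤ F b` whenever `F⁽⁻¹⁾(s) ∈ (a, b]`. Hence a point of `f⁻¹((a,b])` forces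
`μ(f⁻¹((a,b])) = ν_F((a,b]) = F b - F a > 0`.
-/

section QuasiInverse

variable {F : ℝ → ℝ} {s : ℝ}

lemma nonempty_setOf_le_apply (hs : s < ⨆ r, F r) : {r | s ≤ F r}.Nonempty :=
  let ⟨r, hr⟩ := exists_lt_of_lt_ciSup hs
  ⟨r, hr.le⟩

lemma bddBelow_setOf_le_apply (hF : Monotone F) (hs : ⨅ r, F r < s) :
    BddBelow {r | s ≤ F r} := by
  obtain ⟨r₀, hr₀⟩ := exists_lt_of_ciInf_lt hs
  refine ⟨r₀, fun r (hr : s ≤ F r) => ?_⟩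
  by_contra! hlt
  exact (hr₀.trans_le hr).not_ge (hF hlt.le)

lemma lt_of_lt_quasiInverse (hF : Monotone F) (hs : ⨅ r, F r < s) {a : ℝ}
    (ha : a < quasiInverse F s) : F a < s := by
  by_contra! hle
  exact ha.not_ge (csInf_le (bddBelow_setOf_le_apply hF hs) hle)

lemma le_of_quasiInverse_le {b : ℝ} (hF : Monotone F) (hrc : ContinuousWithinAt F (Ici b) b)
    (hs : s < ⨆ r, F r) (hb : quasiInverse F s ≤ b) : s ≤ F b := by
  have hright : ∀ x ∈ Ioi b, s ≤ F x := fun x hx => by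
    obtain ⟨r, hr, hrx⟩ := exists_lt_of_csInf_lt (nonempty_setOf_le_apply hs) (hb.trans_lt hx)
    exact hr.trans (hF hrx.le)
  exact ge_of_tendsto (hrc.mono_left (nhdsWithin_mono b Ioi_subset_Ici_self))
    (eventually_nhdsWithin_of_forall hright)

end QuasiInverse

theorem preimage_Ioc_null_iff_empty_general
    {Z : Type*} [MeasurableSpace Z] (μ : Measure Z)
    (F : ℝ → ℝ) (hmono : Monotone F)
    (hrc : ∀ x : ℝ, ContinuousWithinAt F (Ici x) x)
    (hinf : ⨅ r : ℝ, F r = 0) (hsup : ⨆ r : ℝ, F r = 1)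
    (f : Z → ℝ) (hf : Measurable f)
    (hpush : Measure.map f μ =
      ({ toFun := F, mono' := hmono, right_continuous' := hrc } :
        StieltjesFunction ℝ).measure)
    (α : Z → ℝ) (hα01 : ∀ z : Z, α z ∈ Ioo (0 : ℝ) 1)
    (hfα : ∀ z : Z, f z = quasiInverse F (α z)) :
    ∀ a b : ℝ, a < b → (μ (f ⁻¹' Ioc a b) = 0 ↔ f ⁻¹' Ioc a b = ∅) := by
  intro a b _
  refine ⟨fun hnull => ?_, fun hempty => by rw [hempty, measure_empty]⟩
  have hFba : F b ≤ F a := by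
    rwa [← Measure.map_apply hf measurableSet_Ioc, hpush, StieltjesFunction.measure_Ioc,
      ENNReal.ofReal_eq_zero, sub_nonpos] at hnull
  refine eq_empty_of_forall_notMem fun z ⟨hza, hzb⟩ => ?_
  rw [hfα] at hza hzb
  have hlow : F a < α z := lt_of_lt_quasiInverse hmono (hinf ▸ (hα01 z).1) hza
  have hhigh : α z ≤ F b := le_of_quasiInverse_le hmono (hrc b) (hsup ▸ (hα01 z).2) hzb
  linarith

/-- If `f : Z → ℝ` is Borel with `f_*μ = ν_F` and `f = F⁽⁻¹⁾ ∘ α` for a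
probability barrier `α` (Borel, `(0,1)`-valued, `α_*μ = λ_{(0,1)}`), then for all reals
`a < b` the set `f⁻¹((a,b])` is `μ`-null iff it is empty. -/
theorem preimage_Ioc_null_iff_empty
    {Z : Type*} [MeasurableSpace Z] (μ : Measure Z) [IsProbabilityMeasure μ]
    (F : ℝ → ℝ) (hmono : Monotone F)
    (hrc : ∀ x : ℝ, ContinuousWithinAt F (Ici x) x)
    (hinf : ⨅ r : ℝ, F r = 0) (hsup : ⨆ r : ℝ, F r = 1)
    (f : Z → ℝ) (hf : Measurable f)
    (hpush : Measure.map f μ =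
      ({ toFun := F, mono' := hmono, right_continuous' := hrc } :
        StieltjesFunction ℝ).measure)
    (α : Z → ℝ) (hα : Measurable α) (hα01 : ∀ z : Z, α z ∈ Ioo (0 : ℝ) 1)
    (hαpush : Measure.map α μ = volume.restrict (Ioo (0 : ℝ) 1))
    (hfα : ∀ z : Z, f z = quasiInverse F (α z)) :
    ∀ a b : ℝ, a < b → (μ (f ⁻¹' Ioc a b) = 0 ↔ f ⁻¹' Ioc a b = ∅) :=
  preimage_Ioc_null_iff_empty_general μ F hmono hrc hinf hsup f hf hpush α hα01 hfα
end
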